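/- arXiv:1706.09229 — 5 statements merged into one kernel-verified Lean document; each statement's English description precedes it below -/
import Mathlib

section
/- Resolution through a right shift: for bitvectors A, B, a, b, c of width l and n : ℕ, if (a >>> n ||| ~~~b) = allOnes and (~~~a ||| c) = allOnes, then (c >>> n ||| ~~~b) = allOnes. -/
theorem resolution_through_right_shift (l : ℕ) (A B a b c : BitVec l) (n : ℕ)
    (h1 : (a >>> n ||| ~~~b) = BitVec.allOnes l)
    (h2 : (~~~a ||| c) = BitVec.allOnes l) :
    (c >>> n ||| ~~~b) = BitVec.allOnes l := by
  ext i
  have H1 := congrArg (·.getLsbD i) h1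
  have H2 := congrArg (·.getLsbD (n + i)) h2
  have hil : (i : ℕ) < l := by assumption
  simp [hil, BitVec.getLsbD_ushiftRight, Bool.or_eq_true, Bool.not_eq_true'] at H1 H2 ⊢
  by_cases hni : n + (i : ℕ) < l
  · simp [hni] at H1 H2 ⊢
    casesm* _ ∨ _ <;> simp_all
  · have ha : a.getLsbD (n + i) = false := BitVec.getLsbD_of_ge _ _ (by omega)
    simp [ha, hni] at H1 H2 ⊢
    simp_all
end

section
/- General shifted resolution rule: for bitvectors A, B, y of width l and n : ℕ, if (A ||| (y >>> n)) = allOnes and (B ||| ~~~y) = allOnes, then (A ||| (B >>> n)) = allOnes. -/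
theorem shifted_resolution_right (l : ℕ) (A B y : BitVec l) (n : ℕ)
    (h1 : (A ||| (y >>> n)) = BitVec.allOnes l)
    (h2 : (B ||| ~~~y) = BitVec.allOnes l) :
    (A ||| (B >>> n)) = BitVec.allOnes l := by
  apply BitVec.eq_of_getLsbD_eq
  intro i hi
  have e1 := congrArg (fun v => v.getLsbD i) h1
  simp [BitVec.getLsbD_or, BitVec.getLsbD_ushiftRight, hi] at e1 ⊢
  rcases e1 with e1 | e1
  · left; exact e1
  · right
    have e2 := congrArg (fun v => v.getLsbD (n + i)) h2
    by_cases hlt : n + i < l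
    · simp [BitVec.getLsbD_or, BitVec.getLsbD_not, hlt] at e2
      rcases e2 with e2 | e2
      · exact e2
      · simp [BitVec.getLsbD_eq_getElem hlt, e2] at e1
    · simp [BitVec.getLsbD_of_ge y _ (le_of_not_gt hlt)] at e1
end

section
/- General left-shifted resolution rule: for bitvectors A, B, y of width l and n : ℕ, if (A ||| (y <<< n)) = allOnes and (B ||| ~~~y) = allOnes, then (A ||| (B <<< n)) = allOnes. -/
theorem shifted_resolution_left (l : ℕ) (A B y : BitVec l) (n : ℕ)
    (h1 : (A ||| (y <<< n)) = BitVec.allOnes l)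
    (h2 : (B ||| ~~~y) = BitVec.allOnes l) :
    (A ||| (B <<< n)) = BitVec.allOnes l := by
  ext i hi
  have e1 := congrArg (fun v => v.getLsbD i) h1
  simp [BitVec.getLsbD_or, BitVec.getLsbD_shiftLeft, hi] at e1 ⊢
  rcases e1 with e1 | ⟨hn, hy⟩
  · exact Or.inl e1
  · have e2 := congrArg (fun v => v.getLsbD (i - n)) h2
    have hlt : (i : ℕ) - n < l := by omega
    simp [BitVec.getLsbD_or, hlt, hy] at e2
    exact Or.inr ⟨hn, e2⟩
end

section
/- Same-direction shifted resolution: for bitvectors A, B, y of width l and n, m : ℕ with m ≤ n, if (A ||| (y <<< n)) = allOnes and (B ||| (~~~y <<< m)) = allOnes, then (A ||| ((B >>> m) <<< n)) = allOnes. -/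
theorem same_direction_shifted_resolution (l : ℕ) (A B y : BitVec l) (n m : ℕ)
    (hmn : m ≤ n)
    (h1 : (A ||| (y <<< n)) = BitVec.allOnes l)
    (h2 : (B ||| (~~~y <<< m)) = BitVec.allOnes l) :
    (A ||| ((B >>> m) <<< n)) = BitVec.allOnes l := by
  ext i hi
  rw [← BitVec.getLsbD_eq_getElem, ← BitVec.getLsbD_eq_getElem]
  have h1' := congrArg (fun x => x.getLsbD i) h1
  simp only [BitVec.getLsbD_or, BitVec.getLsbD_shiftLeft, BitVec.getLsbD_allOnes] at h1' ⊢
  rw [decide_eq_true hi] at h1'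
  rcases Bool.or_eq_true_iff.mp h1' with hA | hy
  · simp [hA, hi]
  · simp only [Bool.and_eq_true, decide_eq_true_eq, Bool.not_eq_true', decide_eq_false_iff_not,
      Not.intro] at hy
    obtain ⟨⟨hil, hni⟩, hyi⟩ := hy
    push_neg at hni
    have h2' := congrArg (fun x => x.getLsbD (i - n + m)) h2
    simp only [BitVec.getLsbD_or, BitVec.getLsbD_shiftLeft, BitVec.getLsbD_not,
      BitVec.getLsbD_allOnes, BitVec.getLsbD_ushiftRight] at h2' ⊢
    have hlt : i - n + m < l := by omega
    simp only [hlt, decide_true, Bool.true_and] at h2'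
    have : i - n + m - m = i - n := by omega
    rw [this] at h2'
    simp [hyi, hlt, Nat.le_add_left] at h2'
    have : i - n + m = m + (i - n) := by omega
    simp [hil, hi, Nat.not_lt.mpr hni, Nat.add_comm]
    right; rw [← BitVec.getLsbD_eq_getElem, Nat.add_comm] at h2'; exact h2'
end

section
/- Opposing shifted resolution: for bitvectors A, B, y of width l and n, m : ℕ with m ≤ n and n + m ≤ l, if (A ||| (y >>> n)) = allOnes and (B ||| (~~~y <<< m)) = allOnes, then (A ||| (B >>> (m + n)) ||| ((2^m - 1 : BitVec l) <<< (l - (n + m)))) = allOnes. -/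
lemma pow_two_bv (l m : ℕ) : (2#l) ^ m = BitVec.ofNat l (2 ^ m) := by
  induction m with
  | zero => simp
  | succ k ih =>
    rw [pow_succ, ih, pow_succ]
    apply BitVec.eq_of_toNat_eq
    simp [BitVec.toNat_mul, Nat.mul_mod]
    rw [← Nat.pow_mod]

lemma bits_lemma (l m j : ℕ) (hm : m ≤ l) :
    ((2#l) ^ m - 1#l).getLsbD j = decide (j < m) := by
  have hp : 0 < 2 ^ m := by positivity
  have h2 : 2 ^ m ≤ 2 ^ l := Nat.pow_le_pow_right (by norm_num) hm
  have : (2#l) ^ m - 1#l = BitVec.ofNat l (2 ^ m - 1) := by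
    rw [pow_two_bv]
    apply BitVec.eq_of_toNat_eq
    simp [BitVec.toNat_sub, BitVec.toNat_ofNat, Nat.mod_eq_of_lt (show 2^m - 1 < 2^l by omega)]
    rcases Nat.eq_zero_or_pos l with hl | hl
    · subst hl; interval_cases m <;> simp
    · have h1l : (1 : ℕ) % 2 ^ l = 1 := Nat.mod_eq_of_lt (by
        have : 2 ^ 1 ≤ 2 ^ l := Nat.pow_le_pow_right (by norm_num) hl
        omega)
      rw [h1l, Nat.add_mod, ← Nat.pow_mod, ← Nat.add_mod, show 2 ^ l - 1 + 2 ^ m = 2 ^ m - 1 + 2 ^ l by omega,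
        Nat.add_mod_right, Nat.mod_eq_of_lt (by omega)]
  rw [this, BitVec.getLsbD_ofNat, Nat.testBit_two_pow_sub_one]
  by_cases h : j < m <;> simp [h] <;> omega

theorem opposing_shifted_resolution (l : ℕ) (A B y : BitVec l) (n m : ℕ)
    (hmn : m ≤ n) (hnm : n + m ≤ l)
    (h1 : (A ||| (y >>> n)) = BitVec.allOnes l)
    (h2 : (B ||| (~~~y <<< m)) = BitVec.allOnes l) :
    (A ||| (B >>> (m + n)) ||| ((2^m - 1 : BitVec l) <<< (l - (n + m)))) =
      BitVec.allOnes l := by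
  ext i
  have e1 := congrArg (fun v => v[i]) h1
  have e2 := congrArg (fun v => v.getLsbD (m + n + i)) h2
  simp [BitVec.getLsbD_or, BitVec.getLsbD_shiftLeft, BitVec.getLsbD_not] at e1 e2 ⊢
  by_cases hy : l ≤ n + (i : ℕ)
  · left; left
    rcases e1 with h | h
    · exact h
    · exact absurd h (by simp [BitVec.getLsbD_of_ge _ _ hy])
  · push_neg at hy
    by_cases hb : m + n + (i : ℕ) < l
    · left
      rw [show m + n + (i : ℕ) - m = n + i by omega] at e2
      simp only [hb, hy, decide_true, show ¬ (m + n + (i : ℕ) < m) by omega,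
        decide_false, Bool.not_false, Bool.true_and, Bool.and_true,
        Bool.or_eq_true, Bool.not_eq_true'] at e2
      rcases e2 with h | h
      · right; exact h
      · rcases e1 with h' | h'
        · left; exact h'
        · rw [h'] at h; exact absurd h (by simp)
    · right
      constructor
      · omega
      · rw [← BitVec.getLsbD_eq_getElem, bits_lemma l m _ (by omega)]
        simp; omega
end
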